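/- The polynomial λ^4 - λ^3 - 2λ^2 - 4λ - 8 is irreducible over ℚ and has a real root in the interval (2.69, 2.70). -/

import Mathlib

/-!
Modulo 3 the quartic becomes `X⁴ - X³ + X² - X + 1`, the tenth cyclotomic polynomial. Since 3 has
order `4 = φ(10)` in `(ℤ/10ℤ)ˣ`, every irreducible factor of `Φ₁₀` over `𝔽₃` has degree 4, so the
reduction is irreducible; the quartic is monic, hence irreducible over `ℤ` and, by Gauss's lemma,
over `ℚ`. The real root comes from the intermediate value theorem: the quartic is negative at 2.69
and positive at 2.70.
-/

open Polynomial

namespace Polynomial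

theorem cyclotomic_ten (R : Type*) [CommRing R] :
    cyclotomic 10 R = X ^ 4 - X ^ 3 + X ^ 2 - X + 1 := by
  suffices cyclotomic 10 ℤ = X ^ 4 - X ^ 3 + X ^ 2 - X + 1 by
    rw [← map_cyclotomic_int, this]
    simp
  have : Fact (Nat.Prime 5) := ⟨by norm_num⟩
  -- `Φ₅(X²) = Φ₁₀ Φ₅`, and `Φ₅ ≠ 0` can be cancelled in `ℤ[X]`
  have hexpand := cyclotomic_expand_eq_cyclotomic_mul Nat.prime_two (n := 5) (by norm_num) ℤ
  rw [cyclotomic_prime ℤ 5] at hexpand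
  apply mul_right_cancel₀ (cyclotomic_ne_zero 5 ℤ)
  rw [cyclotomic_prime ℤ 5, ← hexpand]
  simp [Finset.sum_range_succ]
  ring

theorem irreducible_cyclotomic_ten_zmod_three : Irreducible (cyclotomic 10 (ZMod 3)) := by
  have horder : orderOf (ZMod.unitOfCoprime 3 (by norm_num : Nat.Coprime 3 10)) = 4 := by
    rw [orderOf_eq_iff (by norm_num)]
    decide
  exact ZMod.irreducible_of_dvd_cyclotomic_of_natDegree (p := 3) (by norm_num) dvd_rfl
    (by rw [natDegree_cyclotomic, horder]; decide)

theorem Monic.irreducible_map_rat_of_irreducible_map {S : Type*} [CommRing S] [IsDomain S]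
    {f : ℤ[X]} (hf : f.Monic) (φ : ℤ →+* S) (h : Irreducible (f.map φ)) :
    Irreducible (f.map (Int.castRingHom ℚ)) :=
  (IsPrimitive.Int.irreducible_iff_irreducible_map_cast hf.isPrimitive).mp
    (hf.irreducible_of_irreducible_map φ f h)

end Polynomial

theorem map_zmod_three_quartic :
    (X ^ 4 - X ^ 3 - 2 * X ^ 2 - 4 * X - 8 : ℤ[X]).map (Int.castRingHom (ZMod 3)) =
      cyclotomic 10 (ZMod 3) := by
  rw [cyclotomic_ten]
  simp only [Polynomial.map_sub, Polynomial.map_pow, Polynomial.map_mul, Polynomial.map_X,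
    Polynomial.map_ofNat]
  linear_combination (-X ^ 2 - X - 3) * CharP.ofNat_eq_zero (ZMod 3)[X] 3

/-- The polynomial λ^4 - λ^3 - 2λ^2 - 4λ - 8 is irreducible over ℚ and has a real
root in the interval (2.69, 2.70). -/
theorem stmt_14 :
    Irreducible (X ^ 4 - X ^ 3 - 2 * X ^ 2 - 4 * X - 8 : ℚ[X]) ∧
      ∃ x : ℝ, x ∈ Set.Ioo (2.69 : ℝ) 2.70 ∧
        x ^ 4 - x ^ 3 - 2 * x ^ 2 - 4 * x - 8 = 0 := by
  constructor
  · have hmonic : (X ^ 4 - X ^ 3 - 2 * X ^ 2 - 4 * X - 8 : ℤ[X]).Monic := by monicity!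
    simpa using hmonic.irreducible_map_rat_of_irreducible_map _
      (map_zmod_three_quartic ▸ irreducible_cyclotomic_ten_zmod_three)
  · have hcont : ContinuousOn (fun x : ℝ => x ^ 4 - x ^ 3 - 2 * x ^ 2 - 4 * x - 8)
        (Set.Icc 2.69 2.70) := by fun_prop
    exact intermediate_value_Ioo (by norm_num) hcont ⟨by norm_num, by norm_num⟩
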